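/- arXiv:0712.4160 — 4 statements merged into one kernel-verified Lean document; each statement's English description precedes it below -/
import Mathlib

section
/- Let (x, x̄, p, q) ∈ Λ^c(v,d) and let h_1,…,h_r be a path in the doubled quiver, i.e. a sequence of arrows (each arrow being some x_i : V_i → V_{i+1} or some x̄_i : V_{i+1} → V_i) such that the target vertex of h_t equals the source vertex of h_{t+1} for 1 ≤ t < r. Let i′ be the source vertex of h_1 and j′ the target vertex of h_r. Then there exists an element P of the (non-unital) ℂ-subalgebra of End(D_1 ⊕ ⋯ ⊕ D_{n−1}) generated by the maps q_{l→j} p_{i→l} (for i, j ∈ {1,…,n−1} and 1 ≤ l ≤ min(i,j), each extended by zero to an endomorphism of ⊕_k D_k) such that the linear map q_{j′} ∘ x_{h_r} ∘ x_{h_{r−1}} ∘ ⋯ ∘ x_{h_1} ∘ p_{i′} : D_{i′} → D_{j′} equals the component of P from D_{i′} to D_{j′} (i.e. the composition of the inclusion D_{i′} ↪ ⊕_k D_k, P, and the projection ⊕_k D_k ↠ D_{j′}). -/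
/-!
Gather the vertices into `W = Π k, V k`. The arrows become two endomorphisms `X`, `X̄` of `W`,
`p` and `q` become `P : Π_{k<n} D_k → W` and `Q : W → Π_{k<n} D_k`, and the relations of
`Λ^c(v,d)` say exactly `X̄ X = X X̄ + P Q - C` with `C` diagonal. A path is a word `w` in `X`, `X̄`,
and the map of the theorem is a block of `Q w P`, so it suffices to put `Q w P` in the algebra.

Straighten the word. Where `X̄` directly follows `X`, the relation turns `Q w₂ X̄ X w₁ P` into
the swapped word, plus the product `(Q w₂ P)(Q w₁ P)`, minus `Q w₂ w₁ P` times a diagonal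
(`C` commutes past `w₁` and `P` up to reindexing its entries). Since every generator has a single
source block, the algebra is stable under right multiplication by diagonals. Swapping lowers the
number of inversions and the other words are shorter. A straightened word `X^a X̄^b` gives,
block by block, a generator `q_{l→j} p_{i→l}` or zero.
-/

namespace QuiverA

variable {V D : ℕ → Type} [∀ i, AddCommGroup (V i)] [∀ i, Module ℂ (V i)]
  [∀ i, AddCommGroup (D i)] [∀ i, Module ℂ (D i)]

/-- An arrow of the doubled quiver: `(i, true)` is the forward arrow `x_i : V_i → V_{i+1}`,
`(i, false)` is the backward arrow `x̄_i : V_{i+1} → V_i`. -/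
def asrc (a : ℕ × Bool) : ℕ := if a.2 then a.1 else a.1 + 1

def atgt (a : ℕ × Bool) : ℕ := if a.2 then a.1 + 1 else a.1

/-- The linear map attached to an arrow of the doubled quiver. -/
def step (x : ∀ i, V i →ₗ[ℂ] V (i + 1)) (xbar : ∀ i, V (i + 1) →ₗ[ℂ] V i) :
    (a : ℕ × Bool) → (V (asrc a) →ₗ[ℂ] V (atgt a))
  | (i, true) => x i
  | (i, false) => xbar i

def homOfEq {i j : ℕ} (h : i = j) : V i →ₗ[ℂ] V j := h ▸ LinearMap.id

/-- The final vertex of a path (list of arrows) starting at vertex `v`. -/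
def endVertex : List (ℕ × Bool) → ℕ → ℕ
  | [], v => v
  | a :: L, _ => endVertex L (atgt a)

/-- The composition `x_{h_r} ∘ ⋯ ∘ x_{h_1}` of the maps along a path of arrows starting
at vertex `v` (junk `0` factor inserted where sources do not match). -/
def pathComp (x : ∀ i, V i →ₗ[ℂ] V (i + 1)) (xbar : ∀ i, V (i + 1) →ₗ[ℂ] V i) :
    (L : List (ℕ × Bool)) → (v : ℕ) → (V v →ₗ[ℂ] V (endVertex L v))
  | [], _ => LinearMap.id
  | a :: L, v => pathComp x xbar L (atgt a) ∘ₗ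
      (if h : asrc a = v then step x xbar a ∘ₗ homOfEq h.symm else 0)

/-- Composition `x_{i-1} ∘ ⋯ ∘ x_j : V_j → V_i` of the forward maps. -/
def xPath (x : ∀ i, V i →ₗ[ℂ] V (i + 1)) (j : ℕ) : (i : ℕ) → (V j →ₗ[ℂ] V i)
  | 0 => if h : j = 0 then h ▸ LinearMap.id else 0
  | (i + 1) => if h : j = i + 1 then h ▸ LinearMap.id else (x i) ∘ₗ xPath x j i

/-- Composition `x̄_i ∘ ⋯ ∘ x̄_{j-1} : V_j → V_i` of the backward maps. -/
def xbarPath (xbar : ∀ i, V (i + 1) →ₗ[ℂ] V i) (i : ℕ) : (j : ℕ) → (V j →ₗ[ℂ] V i)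
  | 0 => if h : i = 0 then (by rw [h]; exact LinearMap.id) else 0
  | (j + 1) => if h : i = j + 1 then (by rw [h]; exact LinearMap.id)
      else xbarPath xbar i j ∘ₗ (xbar j)

/-- `p_{j→i} = x̄_i⋯x̄_{j-1} p_j : D_j → V_i` (for `i ≤ j`). -/
def pTo (xbar : ∀ i, V (i + 1) →ₗ[ℂ] V i) (p : ∀ i, D i →ₗ[ℂ] V i) (j i : ℕ) :
    D j →ₗ[ℂ] V i :=
  xbarPath xbar i j ∘ₗ p j

/-- `q_{j→i} = q_i x_{i-1}⋯x_j : V_j → D_i` (for `j ≤ i`). -/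
def qTo (x : ∀ i, V i →ₗ[ℂ] V (i + 1)) (q : ∀ i, V i →ₗ[ℂ] D i) (j i : ℕ) :
    V j →ₗ[ℂ] D i :=
  q i ∘ₗ xPath x j i

/-- The generators `q_{l→j} p_{i→l}` extended by zero to `End(Π_{k<n} D_k)`. -/
def qpGens (n : ℕ) (x : ∀ i, V i →ₗ[ℂ] V (i + 1)) (xbar : ∀ i, V (i + 1) →ₗ[ℂ] V i)
    (p : ∀ i, D i →ₗ[ℂ] V i) (q : ∀ i, V i →ₗ[ℂ] D i) :
    Set (Module.End ℂ (∀ k : Fin n, D (k : ℕ))) :=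
  {g | ∃ (i j l : ℕ) (hi : i < n) (hj : j < n),
    1 ≤ i ∧ i ≤ n - 1 ∧ 1 ≤ j ∧ j ≤ n - 1 ∧ 1 ≤ l ∧ l ≤ min i j ∧
    g = (LinearMap.single ℂ (fun k : Fin n => D (k : ℕ)) ⟨j, hj⟩)
        ∘ₗ ((qTo x q l j) ∘ₗ (pTo xbar p i l))
        ∘ₗ (LinearMap.proj (R := ℂ) (φ := fun k : Fin n => D (k : ℕ)) ⟨i, hi⟩)}

theorem _root_.NonUnitalAlgebra.mul_mem_adjoin_of_forall_mul_mem {R A : Type*} [CommSemiring R]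
    [NonUnitalSemiring A] [Module R A] [IsScalarTower R A A] [SMulCommClass R A A]
    {s : Set A} {d : A} (hs : ∀ g ∈ s, g * d ∈ NonUnitalAlgebra.adjoin R s)
    {a : A} (ha : a ∈ NonUnitalAlgebra.adjoin R s) : a * d ∈ NonUnitalAlgebra.adjoin R s := by
  induction ha using NonUnitalAlgebra.adjoin_induction with
  | mem g hg => exact hs g hg
  | add a b _ _ ha hb => rw [add_mul]; exact add_mem ha hb
  | zero => rw [zero_mul]; exact zero_mem _
  | mul a b ha _ _ hb => rw [mul_assoc]; exact mul_mem ha hb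
  | smul r a _ ha => rw [smul_mul_assoc]; exact SMulMemClass.smul_mem r ha

section TotalSpace

variable (n : ℕ) (x : ∀ i, V i →ₗ[ℂ] V (i + 1)) (xbar : ∀ i, V (i + 1) →ₗ[ℂ] V i)
  (p : ∀ i, D i →ₗ[ℂ] V i) (q : ∀ i, V i →ₗ[ℂ] D i)

def totalX : Module.End ℂ (∀ k, V k) :=
  LinearMap.pi fun
    | 0 => 0
    | m + 1 => x m ∘ₗ LinearMap.proj m

def totalXbar : Module.End ℂ (∀ k, V k) :=
  LinearMap.pi fun k => xbar k ∘ₗ LinearMap.proj (k + 1)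

def totalP : (∀ k : Fin n, D k) →ₗ[ℂ] (∀ k, V k) :=
  LinearMap.pi fun k => if h : k < n then p k ∘ₗ LinearMap.proj (⟨k, h⟩ : Fin n) else 0

def totalQ : (∀ k, V k) →ₗ[ℂ] (∀ k : Fin n, D k) :=
  LinearMap.pi fun k => q k ∘ₗ LinearMap.proj (k : ℕ)

def diagV (γ : ℕ → ℂ) : Module.End ℂ (∀ k, V k) :=
  LinearMap.pi fun k => γ k • LinearMap.proj k

def diagD (γ : ℕ → ℂ) : Module.End ℂ (∀ k : Fin n, D k) :=
  LinearMap.pi fun k => γ k • LinearMap.proj k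

variable {x xbar p q}

@[simp] theorem totalX_apply_zero (f : ∀ k, V k) : totalX x f 0 = 0 := rfl
@[simp] theorem totalX_apply_succ (f : ∀ k, V k) (m : ℕ) : totalX x f (m + 1) = x m (f m) := rfl
@[simp] theorem totalXbar_apply (f : ∀ k, V k) (k : ℕ) :
    totalXbar xbar f k = xbar k (f (k + 1)) := rfl
theorem totalP_apply (d : ∀ k : Fin n, D k) (k : ℕ) :
    totalP n p d k = if h : k < n then p k (d ⟨k, h⟩) else 0 := by
  rw [totalP, LinearMap.pi_apply]; split_ifs <;> rfl
@[simp] theorem totalQ_apply (f : ∀ k, V k) (j : Fin n) : totalQ n q f j = q j (f j) := rfl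
@[simp] theorem diagV_apply (γ : ℕ → ℂ) (f : ∀ k, V k) (k : ℕ) :
    diagV γ f k = γ k • f k := rfl
@[simp] theorem diagD_apply (γ : ℕ → ℂ) (d : ∀ k : Fin n, D k) (k : Fin n) :
    diagD n γ d k = γ k • d k := rfl

theorem totalXbar_mul_totalX (c : ℕ → ℂ)
    (hx : ∀ i, ¬(1 ≤ i ∧ i + 1 ≤ n - 1) → x i = 0)
    (hp : ∀ i, ¬(1 ≤ i ∧ i ≤ n - 1) → p i = 0)
    (hrel : ∀ i : ℕ, i + 1 ≤ n - 1 →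
      (c (i + 1)) • (LinearMap.id : V (i + 1) →ₗ[ℂ] V (i + 1)) + (xbar (i + 1)) ∘ₗ (x (i + 1))
        = (x i) ∘ₗ (xbar i) + (p (i + 1)) ∘ₗ (q (i + 1))) :
    totalXbar xbar * totalX x = totalX x * totalXbar xbar + totalP n p ∘ₗ totalQ n q
      - diagV (fun k => if 1 ≤ k ∧ k < n then c k else 0) := by
  refine LinearMap.ext fun f => funext fun k => ?_
  simp only [LinearMap.sub_apply, LinearMap.add_apply, Module.End.mul_apply,
    LinearMap.comp_apply, Pi.sub_apply, Pi.add_apply, totalP_apply, diagV_apply]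
  cases k with
  | zero => simp [hx 0 (by omega), hp 0 (by omega)]
  | succ m =>
    by_cases hm : m + 1 < n
    · have := LinearMap.congr_fun (hrel m (by omega)) (f (m + 1))
      simp only [LinearMap.add_apply, LinearMap.smul_apply, LinearMap.id_apply,
        LinearMap.comp_apply] at this
      simp only [totalXbar_apply, totalX_apply_succ, dif_pos hm, totalQ_apply,
        if_pos (⟨by omega, hm⟩ : 1 ≤ m + 1 ∧ m + 1 < n)]
      rw [← this]
      abel
    · simp [hx (m + 1) (by omega), hx m (by omega), hm]

theorem totalX_comp_single (l : ℕ) :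
    totalX x ∘ₗ LinearMap.single ℂ V l = LinearMap.single ℂ V (l + 1) ∘ₗ x l := by
  ext u k
  cases k with
  | zero => simp
  | succ m =>
    by_cases h : m = l
    · subst h; simp
    · simp [Pi.single_eq_of_ne h, Pi.single_eq_of_ne (show m + 1 ≠ l + 1 by omega)]

theorem totalXbar_comp_single_succ (l : ℕ) :
    totalXbar xbar ∘ₗ LinearMap.single ℂ V (l + 1) = LinearMap.single ℂ V l ∘ₗ xbar l := by
  ext u k
  by_cases h : k = l
  · subst h; simp
  · simp [Pi.single_eq_of_ne h, Pi.single_eq_of_ne (show k + 1 ≠ l + 1 by omega)]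

theorem totalXbar_comp_single_zero : totalXbar xbar ∘ₗ LinearMap.single ℂ V 0 = 0 := by
  ext u k
  simp

theorem totalP_comp_single (i : Fin n) :
    totalP n p ∘ₗ LinearMap.single ℂ (fun k : Fin n => D k) i
      = LinearMap.single ℂ V i ∘ₗ p i := by
  ext u k
  simp only [LinearMap.comp_apply, LinearMap.coe_single, totalP_apply]
  by_cases h : k = i
  · subst h; simp
  · rw [Pi.single_eq_of_ne h]
    split_ifs with hk
    · rw [Pi.single_eq_of_ne (show (⟨k, hk⟩ : Fin n) ≠ i from fun e => h (congrArg Fin.val e)),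
        map_zero]
    · rfl

theorem totalQ_comp_single_of_lt {j : ℕ} (hj : j < n) :
    totalQ n q ∘ₗ LinearMap.single ℂ V j
      = LinearMap.single ℂ (fun k : Fin n => D k) ⟨j, hj⟩ ∘ₗ q j := by
  ext u ⟨k, hk⟩
  by_cases h : k = j
  · subst h; simp
  · simp [Pi.single_eq_of_ne h, Pi.single_eq_of_ne (show (⟨k, hk⟩ : Fin n) ≠ ⟨j, hj⟩ by simpa)]

theorem totalQ_comp_single_of_le {j : ℕ} (hj : n ≤ j) :
    totalQ n q ∘ₗ LinearMap.single ℂ V j = 0 := by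
  ext u k
  simp [Pi.single_eq_of_ne (show (k : ℕ) ≠ j by omega)]

theorem diagV_mul_totalX (γ : ℕ → ℂ) :
    diagV γ * totalX x = totalX x * diagV (fun k => γ (k + 1)) := by
  refine LinearMap.ext fun f => funext fun k => ?_
  cases k <;> simp

theorem diagV_mul_totalXbar (γ : ℕ → ℂ) :
    diagV γ * totalXbar xbar = totalXbar xbar * diagV (fun k => γ (k - 1)) := by
  refine LinearMap.ext fun f => funext fun k => ?_
  simp

theorem diagV_comp_totalP (γ : ℕ → ℂ) :
    diagV γ ∘ₗ totalP n p = totalP n p ∘ₗ diagD n γ := by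
  refine LinearMap.ext fun d => funext fun k => ?_
  simp only [LinearMap.comp_apply, diagV_apply, totalP_apply, diagD_apply]
  split_ifs <;> simp

end TotalSpace

section Words

variable (x : ∀ i, V i →ₗ[ℂ] V (i + 1)) (xbar : ∀ i, V (i + 1) →ₗ[ℂ] V i)

/-- `true` stands for `x`, `false` for `x̄`; the head of the word is applied first. -/
def wordMap : List Bool → Module.End ℂ (∀ k, V k)
  | [] => 1
  | true :: w => wordMap w * totalX x
  | false :: w => wordMap w * totalXbar xbar

variable {x xbar}

theorem wordMap_append (u w : List Bool) :
    wordMap x xbar (u ++ w) = wordMap x xbar w * wordMap x xbar u := by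
  induction u with
  | nil => simp [wordMap]
  | cons b u ih => cases b <;> simp [wordMap, ih, mul_assoc]

theorem exists_diagV_mul_wordMap (w : List Bool) (γ : ℕ → ℂ) :
    ∃ γ', diagV γ * wordMap x xbar w = wordMap x xbar w * diagV γ' := by
  induction w generalizing γ with
  | nil => exact ⟨γ, by simp [wordMap]⟩
  | cons b w ih =>
    obtain ⟨γ', hγ'⟩ := ih γ
    cases b
    · exact ⟨_, by rw [wordMap, ← mul_assoc, hγ', mul_assoc, diagV_mul_totalXbar, mul_assoc]⟩
    · exact ⟨_, by rw [wordMap, ← mul_assoc, hγ', mul_assoc, diagV_mul_totalX, mul_assoc]⟩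

theorem xPath_self (l : ℕ) : xPath x l l = LinearMap.id := by
  cases l <;> simp [xPath]

theorem xPath_succ {l m : ℕ} (h : l ≤ m) : xPath x l (m + 1) = x m ∘ₗ xPath x l m := by
  rw [xPath, dif_neg (by omega)]

theorem xbarPath_self (l : ℕ) : xbarPath xbar l l = LinearMap.id := by
  cases l <;> rw [xbarPath, dif_pos rfl] <;> rfl

theorem xbarPath_succ {l m : ℕ} (h : l ≤ m) :
    xbarPath xbar l (m + 1) = xbarPath xbar l m ∘ₗ xbar m := by
  rw [xbarPath, dif_neg (by omega)]

theorem wordMap_replicate_true_comp_single (a l : ℕ) :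
    wordMap x xbar (List.replicate a true) ∘ₗ LinearMap.single ℂ V l
      = LinearMap.single ℂ V (l + a) ∘ₗ xPath x l (l + a) := by
  induction a with
  | zero => simp [wordMap, xPath_self, Module.End.one_eq_id]
  | succ a ih =>
    rw [List.replicate_succ', wordMap_append, Module.End.mul_eq_comp, LinearMap.comp_assoc, ih,
      ← LinearMap.comp_assoc, ← add_assoc, xPath_succ (by omega)]
    simp [wordMap, totalX_comp_single, LinearMap.comp_assoc]

theorem wordMap_replicate_false_comp_single (b l : ℕ) :
    wordMap x xbar (List.replicate b false) ∘ₗ LinearMap.single ℂ V (l + b)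
      = LinearMap.single ℂ V l ∘ₗ xbarPath xbar l (l + b) := by
  induction b with
  | zero => simp [wordMap, xbarPath_self, Module.End.one_eq_id]
  | succ b ih =>
    rw [List.replicate_succ, wordMap, Module.End.mul_eq_comp, LinearMap.comp_assoc, ← add_assoc,
      totalXbar_comp_single_succ, ← LinearMap.comp_assoc, ih, xbarPath_succ (by omega),
      LinearMap.comp_assoc]

theorem wordMap_replicate_false_comp_single_of_lt {b i : ℕ} (h : i < b) :
    wordMap x xbar (List.replicate b false) ∘ₗ LinearMap.single ℂ V i = 0 := by
  induction b generalizing i with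
  | zero => omega
  | succ b ih =>
    rw [List.replicate_succ, wordMap, Module.End.mul_eq_comp, LinearMap.comp_assoc]
    cases i with
    | zero => rw [totalXbar_comp_single_zero, LinearMap.comp_zero]
    | succ i => rw [totalXbar_comp_single_succ, ← LinearMap.comp_assoc, ih (by omega),
        LinearMap.zero_comp]

theorem wordMap_replicate_append_replicate_comp_single (b a l : ℕ) :
    wordMap x xbar (List.replicate b false ++ List.replicate a true) ∘ₗ LinearMap.single ℂ V (l + b)
      = LinearMap.single ℂ V (l + a) ∘ₗ xPath x l (l + a) ∘ₗ xbarPath xbar l (l + b) := by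
  rw [wordMap_append, Module.End.mul_eq_comp, LinearMap.comp_assoc,
    wordMap_replicate_false_comp_single, ← LinearMap.comp_assoc,
    wordMap_replicate_true_comp_single, LinearMap.comp_assoc]

theorem wordMap_replicate_append_replicate_comp_single_of_lt (a : ℕ) {b i : ℕ} (h : i < b) :
    wordMap x xbar (List.replicate b false ++ List.replicate a true) ∘ₗ LinearMap.single ℂ V i
      = 0 := by
  rw [wordMap_append, Module.End.mul_eq_comp, LinearMap.comp_assoc,
    wordMap_replicate_false_comp_single_of_lt h, LinearMap.comp_zero]

def invCount : List Bool → ℕ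
  | [] => 0
  | true :: w => w.count false + invCount w
  | false :: w => invCount w

theorem invCount_append_true_false (w₁ w₂ : List Bool) :
    invCount (w₁ ++ true :: false :: w₂) = invCount (w₁ ++ false :: true :: w₂) + 1 := by
  induction w₁ with
  | nil => simp [invCount]; omega
  | cons b w₁ ih =>
    cases b
    · simpa [invCount] using ih
    · simp [invCount, List.count_append, ih]
      omega

theorem exists_eq_replicate_append_replicate_or_true_false (w : List Bool) :
    (∃ b a, w = List.replicate b false ++ List.replicate a true) ∨
      ∃ w₁ w₂, w = w₁ ++ true :: false :: w₂ := by
  induction w with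
  | nil => exact Or.inl ⟨0, 0, rfl⟩
  | cons b w ih =>
    rcases ih with ⟨b', a, rfl⟩ | ⟨w₁, w₂, rfl⟩
    · cases b
      · exact Or.inl ⟨b' + 1, a, rfl⟩
      · cases b' with
        | zero => exact Or.inl ⟨0, a + 1, rfl⟩
        | succ b' =>
          exact Or.inr ⟨[], List.replicate b' false ++ List.replicate a true, rfl⟩
    · exact Or.inr ⟨b :: w₁, w₂, rfl⟩

end Words

section FramedWords

variable (n : ℕ) (x : ∀ i, V i →ₗ[ℂ] V (i + 1)) (xbar : ∀ i, V (i + 1) →ₗ[ℂ] V i)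
  (p : ∀ i, D i →ₗ[ℂ] V i) (q : ∀ i, V i →ₗ[ℂ] D i)

def framedWord (w : List Bool) : Module.End ℂ (∀ k : Fin n, D k) :=
  totalQ n q ∘ₗ wordMap x xbar w ∘ₗ totalP n p

variable {n x xbar p q}

theorem framedWord_append_true_false {γ : ℕ → ℂ}
    (hrel : totalXbar xbar * totalX x = totalX x * totalXbar xbar + totalP n p ∘ₗ totalQ n q
      - diagV γ)
    (w₁ w₂ : List Bool) :
    ∃ γ, framedWord n x xbar p q (w₁ ++ true :: false :: w₂)
      = framedWord n x xbar p q (w₁ ++ false :: true :: w₂)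
        + framedWord n x xbar p q w₂ * framedWord n x xbar p q w₁
        - framedWord n x xbar p q (w₁ ++ w₂) * diagD n γ := by
  obtain ⟨γ', hγ'⟩ := exists_diagV_mul_wordMap (x := x) (xbar := xbar) w₁ γ
  refine ⟨γ', ?_⟩
  have hswap : wordMap x xbar (w₁ ++ true :: false :: w₂)
      = wordMap x xbar w₂ * (totalXbar xbar * totalX x) * wordMap x xbar w₁ := by
    simp [wordMap_append, wordMap, mul_assoc]
  have hswap' : wordMap x xbar (w₁ ++ false :: true :: w₂)
      = wordMap x xbar w₂ * (totalX x * totalXbar xbar) * wordMap x xbar w₁ := by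
    simp [wordMap_append, wordMap, mul_assoc]
  simp only [framedWord, hswap, hswap', hrel, mul_add, add_mul, mul_sub, sub_mul,
    mul_assoc, hγ', wordMap_append]
  simp only [Module.End.mul_eq_comp, LinearMap.add_comp, LinearMap.comp_add, LinearMap.sub_comp,
    LinearMap.comp_sub, LinearMap.comp_assoc, diagV_comp_totalP]

theorem mul_diagD_mem_adjoin (γ : ℕ → ℂ) {f : Module.End ℂ (∀ k : Fin n, D k)}
    (hf : f ∈ NonUnitalAlgebra.adjoin ℂ (qpGens n x xbar p q)) :
    f * diagD n γ ∈ NonUnitalAlgebra.adjoin ℂ (qpGens n x xbar p q) := by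
  refine NonUnitalAlgebra.mul_mem_adjoin_of_forall_mul_mem ?_ hf
  intro g hg
  obtain ⟨i, j, l, hi, hj, -, -, -, -, -, -, rfl⟩ := id hg
  have hproj : LinearMap.proj ⟨i, hi⟩ ∘ₗ diagD n γ
      = γ i • LinearMap.proj (φ := fun k : Fin n => D k) ⟨i, hi⟩ := rfl
  rw [Module.End.mul_eq_comp, LinearMap.comp_assoc, LinearMap.comp_assoc, hproj,
    LinearMap.comp_smul, LinearMap.comp_smul, ← LinearMap.comp_assoc]
  exact SMulMemClass.smul_mem _ (NonUnitalAlgebra.subset_adjoin ℂ hg)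

theorem xPath_zero_succ (hx0 : x 0 = 0) (j : ℕ) : xPath x 0 (j + 1) = 0 := by
  induction j with
  | zero => rw [xPath_succ le_rfl, hx0, LinearMap.zero_comp]
  | succ j ih => rw [xPath_succ (by omega), ih, LinearMap.comp_zero]

theorem qTo_zero_left (hx0 : x 0 = 0) (hq0 : q 0 = 0) (j : ℕ) : qTo x q 0 j = 0 := by
  cases j with
  | zero => rw [qTo, hq0, LinearMap.zero_comp]
  | succ j => rw [qTo, xPath_zero_succ hx0, LinearMap.comp_zero]

theorem framedWord_comp_single (w : List Bool) {i : ℕ} (hi : i < n) :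
    framedWord n x xbar p q w ∘ₗ LinearMap.single ℂ (fun k : Fin n => D k) ⟨i, hi⟩
      = totalQ n q ∘ₗ (wordMap x xbar w ∘ₗ LinearMap.single ℂ V i) ∘ₗ p i := by
  rw [framedWord, LinearMap.comp_assoc, LinearMap.comp_assoc, totalP_comp_single,
    LinearMap.comp_assoc]

theorem framedWord_replicate_comp_single_proj_mem (hx0 : x 0 = 0) (hq0 : q 0 = 0) (b a : ℕ)
    (i : Fin n) :
    framedWord n x xbar p q (List.replicate b false ++ List.replicate a true)
        ∘ₗ LinearMap.single ℂ (fun k : Fin n => D k) i ∘ₗ LinearMap.proj i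
      ∈ NonUnitalAlgebra.adjoin ℂ (qpGens n x xbar p q) := by
  obtain ⟨i, hi⟩ := i
  rw [← LinearMap.comp_assoc, framedWord_comp_single]
  rcases lt_or_ge i b with hib | hib
  · simp [wordMap_replicate_append_replicate_comp_single_of_lt a hib]
  obtain ⟨l, rfl⟩ : ∃ l, i = l + b := ⟨i - b, by omega⟩
  rw [wordMap_replicate_append_replicate_comp_single, ← LinearMap.comp_assoc,
    ← LinearMap.comp_assoc]
  rcases lt_or_ge (l + a) n with hj | hj
  · rw [totalQ_comp_single_of_lt n hj]
    change LinearMap.single ℂ (fun k : Fin n => D k) ⟨l + a, hj⟩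
      ∘ₗ (qTo x q l (l + a) ∘ₗ pTo xbar p (l + b) l)
      ∘ₗ LinearMap.proj (φ := fun k : Fin n => D k) ⟨l + b, hi⟩ ∈ _
    cases l with
    | zero => simp [qTo_zero_left hx0 hq0]
    | succ l =>
      exact NonUnitalAlgebra.subset_adjoin ℂ
        ⟨_, _, _, hi, hj, by omega, by omega, by omega, by omega, by omega, by omega, rfl⟩
  · simp [totalQ_comp_single_of_le n hj]

theorem framedWord_replicate_mem_adjoin (hx0 : x 0 = 0) (hq0 : q 0 = 0) (b a : ℕ) :
    framedWord n x xbar p q (List.replicate b false ++ List.replicate a true)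
      ∈ NonUnitalAlgebra.adjoin ℂ (qpGens n x xbar p q) := by
  have hid : (1 : Module.End ℂ (∀ k : Fin n, D k))
      = ∑ i, LinearMap.single ℂ (fun k : Fin n => D k) i ∘ₗ LinearMap.proj i :=
    LinearMap.ext fun d => by simp [Finset.univ_sum_single]
  rw [← mul_one (framedWord _ _ _ _ _ _), hid, Finset.mul_sum]
  exact sum_mem fun i _ => framedWord_replicate_comp_single_proj_mem hx0 hq0 b a i

theorem framedWord_mem_adjoin {γ : ℕ → ℂ}
    (hrel : totalXbar xbar * totalX x = totalX x * totalXbar xbar + totalP n p ∘ₗ totalQ n q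
      - diagV γ)
    (hx0 : x 0 = 0) (hq0 : q 0 = 0) (w : List Bool) :
    framedWord n x xbar p q w ∈ NonUnitalAlgebra.adjoin ℂ (qpGens n x xbar p q) := by
  rcases exists_eq_replicate_append_replicate_or_true_false w with ⟨b, a, rfl⟩ | ⟨w₁, w₂, rfl⟩
  · exact framedWord_replicate_mem_adjoin hx0 hq0 b a
  · obtain ⟨γ', hγ'⟩ := framedWord_append_true_false hrel w₁ w₂
    rw [hγ']
    exact sub_mem
      (add_mem (framedWord_mem_adjoin hrel hx0 hq0 _)
        (mul_mem (framedWord_mem_adjoin hrel hx0 hq0 w₂) (framedWord_mem_adjoin hrel hx0 hq0 w₁)))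
      (mul_diagD_mem_adjoin γ' (framedWord_mem_adjoin hrel hx0 hq0 _))
termination_by (w.length, invCount w)
decreasing_by
  all_goals
    subst_vars
    simp only [Prod.lex_def, List.length_append, List.length_cons, invCount_append_true_false,
      true_and]
    omega

end FramedWords

section Paths

variable {x : ∀ i, V i →ₗ[ℂ] V (i + 1)} {xbar : ∀ i, V (i + 1) →ₗ[ℂ] V i}

theorem pathComp_cons_of_asrc_eq (a : ℕ × Bool) (L : List (ℕ × Bool)) {v : ℕ} (h : asrc a = v) :
    pathComp x xbar (a :: L) v = pathComp x xbar L (atgt a) ∘ₗ step x xbar a ∘ₗ homOfEq h.symm := by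
  rw [pathComp, dif_pos h]
  rfl

theorem wordMap_map_snd_comp_single (L : List (ℕ × Bool)) (v : ℕ)
    (hhead : ∀ a ∈ L.head?, asrc a = v) (hchain : List.IsChain (fun s t => atgt s = asrc t) L) :
    wordMap x xbar (L.map Prod.snd) ∘ₗ LinearMap.single ℂ V v
      = LinearMap.single ℂ V (endVertex L v) ∘ₗ pathComp x xbar L v := by
  induction L generalizing v with
  | nil => rfl
  | cons a L ih =>
    obtain ⟨hnext, htail⟩ := List.isChain_cons.mp hchain
    rw [pathComp_cons_of_asrc_eq a L (hhead a rfl)]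
    obtain ⟨m, _ | _⟩ := a
    · obtain rfl : m + 1 = v := hhead _ rfl
      change wordMap x xbar (L.map Prod.snd) ∘ₗ totalXbar xbar ∘ₗ LinearMap.single ℂ V (m + 1)
        = LinearMap.single ℂ V (endVertex L m) ∘ₗ pathComp x xbar L m ∘ₗ xbar m
      rw [totalXbar_comp_single_succ, ← LinearMap.comp_assoc,
        ih m (fun b hb => (hnext b hb).symm) htail, LinearMap.comp_assoc]
    · obtain rfl : m = v := hhead _ rfl
      change wordMap x xbar (L.map Prod.snd) ∘ₗ totalX x ∘ₗ LinearMap.single ℂ V m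
        = LinearMap.single ℂ V (endVertex L (m + 1)) ∘ₗ pathComp x xbar L (m + 1) ∘ₗ x m
      rw [totalX_comp_single, ← LinearMap.comp_assoc,
        ih (m + 1) (fun b hb => (hnext b hb).symm) htail, LinearMap.comp_assoc]

end Paths

/-- The quadruple is encoded by total families of maps vanishing outside the index ranges of
the `A_{n-1}` quiver, the relations of `Λ^c(v,d)` being the family
`c_{i+1}·Id + x̄_{i+1} x_{i+1} = x_i x̄_i + p_{i+1} q_{i+1}` (out-of-range terms zero).
The path is the nonempty list `a :: L'` of arrows. -/
theorem stmt2_general (n : ℕ)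
    (c : ℕ → ℂ)
    (x : ∀ i, V i →ₗ[ℂ] V (i + 1)) (xbar : ∀ i, V (i + 1) →ₗ[ℂ] V i)
    (p : ∀ i, D i →ₗ[ℂ] V i) (q : ∀ i, V i →ₗ[ℂ] D i)
    (hx : ∀ i, ¬(1 ≤ i ∧ i + 1 ≤ n - 1) → x i = 0)
    (hp : ∀ i, ¬(1 ≤ i ∧ i ≤ n - 1) → p i = 0)
    (hq : ∀ i, ¬(1 ≤ i ∧ i ≤ n - 1) → q i = 0)
    (hrel : ∀ i : ℕ, i + 1 ≤ n - 1 →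
      (c (i + 1)) • (LinearMap.id : V (i + 1) →ₗ[ℂ] V (i + 1)) + (xbar (i + 1)) ∘ₗ (x (i + 1))
        = (x i) ∘ₗ (xbar i) + (p (i + 1)) ∘ₗ (q (i + 1)))
    (a : ℕ × Bool) (L' : List (ℕ × Bool))
    (hchain : List.Chain' (fun s t => atgt s = asrc t) (a :: L'))
    (hsrc : asrc a < n)
    (htgt : atgt ((a :: L').getLast (List.cons_ne_nil a L')) < n)
    (hw : endVertex (a :: L') (asrc a) = atgt ((a :: L').getLast (List.cons_ne_nil a L'))) :
    ∃ P ∈ NonUnitalAlgebra.adjoin ℂ (qpGens n x xbar p q),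
      q (atgt ((a :: L').getLast (List.cons_ne_nil a L')))
          ∘ₗ homOfEq hw ∘ₗ pathComp x xbar (a :: L') (asrc a) ∘ₗ p (asrc a)
        = (LinearMap.proj (R := ℂ) (φ := fun k : Fin n => D (k : ℕ))
              ⟨atgt ((a :: L').getLast (List.cons_ne_nil a L')), htgt⟩)
            ∘ₗ P
            ∘ₗ (LinearMap.single ℂ (fun k : Fin n => D (k : ℕ)) ⟨asrc a, hsrc⟩) := by
  refine ⟨framedWord n x xbar p q ((a :: L').map Prod.snd),
    framedWord_mem_adjoin (totalXbar_mul_totalX n c hx hp hrel) (hx 0 (by omega))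
      (hq 0 (by omega)) _, ?_⟩
  have hpath := wordMap_map_snd_comp_single (x := x) (xbar := xbar) (a :: L') (asrc a)
    (fun _ hb => by cases hb; rfl) hchain
  generalize atgt ((a :: L').getLast (List.cons_ne_nil a L')) = j at htgt hw ⊢
  subst hw
  rw [framedWord_comp_single, hpath]
  ext u
  simp only [LinearMap.comp_apply, LinearMap.proj_apply, totalQ_apply, LinearMap.coe_single,
    Pi.single_eq_same]
  rfl

/-- for `(x, x̄, p, q) ∈ Λ^c(v,d)` and a path `h_1, …, h_r` in the doubled
quiver with source vertex `i′` of `h_1` and target vertex `j′` of `h_r`, there is an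
element `P` of the non-unital subalgebra of `End(D_1 ⊕ ⋯ ⊕ D_{n−1})` generated by the
(zero-extended) maps `q_{l→j} p_{i→l}` such that
`q_{j′} ∘ x_{h_r} ∘ ⋯ ∘ x_{h_1} ∘ p_{i′} : D_{i′} → D_{j′}` equals the `(i′, j′)`
component of `P`.

The quadruple is encoded by total families of maps vanishing outside the index ranges of
the `A_{n-1}` quiver, the relations of `Λ^c(v,d)` being the family
`c_{i+1}·Id + x̄_{i+1} x_{i+1} = x_i x̄_i + p_{i+1} q_{i+1}` (out-of-range terms zero).
The path is the nonempty list `a :: L'` of arrows. -/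
theorem stmt2 (n : ℕ) (hn : 2 ≤ n)
    [∀ i, FiniteDimensional ℂ (V i)] [∀ i, FiniteDimensional ℂ (D i)]
    (c : ℕ → ℂ)
    (x : ∀ i, V i →ₗ[ℂ] V (i + 1)) (xbar : ∀ i, V (i + 1) →ₗ[ℂ] V i)
    (p : ∀ i, D i →ₗ[ℂ] V i) (q : ∀ i, V i →ₗ[ℂ] D i)
    (hx : ∀ i, ¬(1 ≤ i ∧ i + 1 ≤ n - 1) → x i = 0)
    (hxbar : ∀ i, ¬(1 ≤ i ∧ i + 1 ≤ n - 1) → xbar i = 0)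
    (hp : ∀ i, ¬(1 ≤ i ∧ i ≤ n - 1) → p i = 0)
    (hq : ∀ i, ¬(1 ≤ i ∧ i ≤ n - 1) → q i = 0)
    (hrel : ∀ i : ℕ, i + 1 ≤ n - 1 →
      (c (i + 1)) • (LinearMap.id : V (i + 1) →ₗ[ℂ] V (i + 1)) + (xbar (i + 1)) ∘ₗ (x (i + 1))
        = (x i) ∘ₗ (xbar i) + (p (i + 1)) ∘ₗ (q (i + 1)))
    (a : ℕ × Bool) (L' : List (ℕ × Bool))
    (hvalid : ∀ b ∈ a :: L', 1 ≤ b.1 ∧ b.1 + 1 ≤ n - 1)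
    (hchain : List.Chain' (fun s t => atgt s = asrc t) (a :: L'))
    (hsrc : asrc a < n)
    (htgt : atgt ((a :: L').getLast (List.cons_ne_nil a L')) < n)
    (hw : endVertex (a :: L') (asrc a) = atgt ((a :: L').getLast (List.cons_ne_nil a L'))) :
    ∃ P ∈ NonUnitalAlgebra.adjoin ℂ (qpGens n x xbar p q),
      q (atgt ((a :: L').getLast (List.cons_ne_nil a L')))
          ∘ₗ homOfEq hw ∘ₗ pathComp x xbar (a :: L') (asrc a) ∘ₗ p (asrc a)
        = (LinearMap.proj (R := ℂ) (φ := fun k : Fin n => D (k : ℕ))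
              ⟨atgt ((a :: L').getLast (List.cons_ne_nil a L')), htgt⟩)
            ∘ₗ P
            ∘ₗ (LinearMap.single ℂ (fun k : Fin n => D (k : ℕ)) ⟨asrc a, hsrc⟩) :=
  stmt2_general n c x xbar p q hx hp hq hrel a L' hchain hsrc htgt hw

end QuiverA
end

section
/- Let e, h ∈ 𝔤 with h diagonalizable with integer eigenvalues and [h, e] = 2e. For s ∈ ℂ^× let ι(s) ∈ GL(N, ℂ) be the invertible operator acting as multiplication by s^k on the k-eigenspace of h, and define s ∗ x := s^{−2} ι(s) x ι(s)^{−1} for x ∈ 𝔤. Let C ⊆ 𝔤 be a subspace with [h, C] ⊆ C which is contained in the sum of the eigenspaces of ad h = [h, −] with eigenvalues ≤ 1, and such that 𝔤 = [𝔤, e] ⊕ C, where [𝔤, e] = {ge − eg : g ∈ 𝔤}. Then: (i) s ∗ e = e for all s ∈ ℂ^×; (ii) s ∗ (e + v) ∈ e + C for every v ∈ C and s ∈ ℂ^×; and (iii) for every v ∈ C, s ∗ (e + v) → e as the real parameter s → +∞. -/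
/-!
Conjugation by `ι s` multiplies an eigenvector of `ad h` with eigenvalue `k` by `s ^ k`: `ι s`
acts by `s ^ j` on the `j`-eigenspace of `h`, which such a vector maps into the
`(j + k)`-eigenspace. Hence `s ∗ x = s ^ (k - 2) • x`, so `e` (with `k = 2`) is fixed. The
`ad h`-stable subspace `C` is the sum of its intersections with the eigenspaces of `ad h`, so it
is preserved, and on it every exponent `k - 2` is negative, so `s ∗ v → 0` and
`s ∗ (e + v) = e + s ∗ v → e`.
-/

open Filter Topology Bornology

namespace Module.End

variable {K V : Type*} [Field K] [AddCommGroup V] [Module K V] [FiniteDimensional K V]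

theorem le_iSup_inf_eigenspace {f : End K V} {p : Submodule K V} (hp : ∀ x ∈ p, f x ∈ p)
    {ι : Type*} (μ : ι → K) (hle : p ≤ ⨆ i, f.eigenspace (μ i)) :
    p ≤ ⨆ i, p ⊓ f.eigenspace (μ i) := by
  have hp_le : p ≤ ⨆ ν, p ⊓ f.eigenspace ν := by
    rw [← Submodule.inf_iSup_genEigenspace hp]
    exact le_inf le_rfl (hle.trans (iSup_le fun i => le_iSup (f.genEigenspace · 1) (μ i)))
  refine hp_le.trans (iSup_le fun ν => ?_)
  by_cases hν : ν ∈ Set.range μ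
  · obtain ⟨i, rfl⟩ := hν
    exact le_iSup (fun i => p ⊓ f.eigenspace (μ i)) i
  · have hdisj : Disjoint (f.eigenspace ν) (⨆ ν' ∈ Set.range μ, f.eigenspace ν') :=
      f.eigenspaces_iSupIndep.disjoint_biSup hν
    rw [iSup_range] at hdisj
    exact le_trans (fun x ⟨hxp, hxν⟩ => hdisj.le_bot ⟨hxν, hle hxp⟩) bot_le

end Module.End

theorem tendsto_zpow_cobounded_nhds_zero {K : Type*} [NormedDivisionRing K] {m : ℤ}
    (hm : m < 0) :
    Tendsto (· ^ m) (cobounded K) (𝓝 0) := by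
  obtain ⟨m, rfl⟩ := neg_surjective m
  lift m to ℕ using by lia
  have : m ≠ 0 := by rintro rfl; simp at hm
  simpa [inv_pow, zero_pow this] using (tendsto_inv₀_cobounded (α := K)).pow m

namespace Matrix

variable {n K : Type*} [Fintype n]

theorem mulVec_mulVec_eq_of_commutator_eq_smul [CommRing K] {h x : Matrix n n K} {v : n → K}
    {k m : K} (hx : h * x - x * h = m • x) (hv : h *ᵥ v = k • v) :
    h *ᵥ (x *ᵥ v) = (k + m) • (x *ᵥ v) := by
  rw [sub_eq_iff_eq_add] at hx
  rw [mulVec_mulVec, hx, add_mulVec, ← mulVec_mulVec, hv, mulVec_smul, smul_mulVec, add_smul,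
    add_comm]

theorem eq_of_mulVec_eigenvector_eq [DecidableEq n] [Field K] {h A B : Matrix n n K}
    {ι : Type*} (μ : ι → K)
    (hdiag : ⨆ i, Module.End.eigenspace h.mulVecLin (μ i) = ⊤)
    (hAB : ∀ i v, h *ᵥ v = μ i • v → A *ᵥ v = B *ᵥ v) : A = B := by
  have hker : ⊤ ≤ LinearMap.ker (A.mulVecLin - B.mulVecLin) := by
    refine hdiag ▸ iSup_le fun i v hv => ?_
    rw [Module.End.mem_eigenspace_iff, mulVecLin_apply] at hv
    simp [hAB i v hv]
  exact ext_of_mulVec_single fun j => sub_eq_zero.mp (hker Submodule.mem_top)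

theorem conj_eq_zpow_smul_of_commutator_eq [DecidableEq n] [Field K] {h : Matrix n n K}
    (hdiag : ⨆ k : ℤ, Module.End.eigenspace h.mulVecLin (k : K) = ⊤)
    {s : K} (hs : s ≠ 0) {U : (Matrix n n K)ˣ}
    (hU : ∀ (k : ℤ) v, h *ᵥ v = (k : K) • v → U.val *ᵥ v = s ^ k • v)
    {x : Matrix n n K} {m : ℤ} (hx : h * x - x * h = (m : K) • x) :
    U.val * x * U⁻¹.val = s ^ m • x := by
  suffices hUx : U.val * x = s ^ m • (x * U.val) by
    rw [hUx, smul_mul_assoc, mul_assoc, Units.mul_inv, mul_one]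
  refine eq_of_mulVec_eigenvector_eq (fun k : ℤ => (k : K)) hdiag fun k v hv => ?_
  have hxv : h *ᵥ (x *ᵥ v) = ((k + m : ℤ) : K) • (x *ᵥ v) := by
    push_cast
    exact mulVec_mulVec_eq_of_commutator_eq_smul hx hv
  rw [← mulVec_mulVec, hU _ _ hxv, smul_mulVec, ← mulVec_mulVec, hU k v hv, mulVec_smul,
    smul_smul, zpow_add₀ hs, mul_comm]

end Matrix

section

open Module.End Matrix

variable {n K : Type*} [Fintype n] [DecidableEq n]

theorem conj_mem_of_invariant_of_le_iSup_eigenspace [Field K] {h : Matrix n n K}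
    (hdiag : ⨆ k : ℤ, eigenspace h.mulVecLin (k : K) = ⊤)
    {C : Submodule K (Matrix n n K)} (hC : ∀ c ∈ C, h * c - c * h ∈ C)
    (hC_le : C ≤ ⨆ k : ℤ, eigenspace (LinearMap.mulLeft K h - LinearMap.mulRight K h) (k : K))
    {s : K} (hs : s ≠ 0) {U : (Matrix n n K)ˣ}
    (hU : ∀ (k : ℤ) v, h *ᵥ v = (k : K) • v → U.val *ᵥ v = s ^ k • v)
    {v : Matrix n n K} (hv : v ∈ C) : U.val * v * U⁻¹.val ∈ C := by
  have hv' := le_iSup_inf_eigenspace hC (fun k : ℤ => (k : K)) hC_le hv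
  clear hv
  induction hv' using Submodule.iSup_induction' with
  | mem k w hw =>
    rw [conj_eq_zpow_smul_of_commutator_eq hdiag hs hU (mem_eigenspace_iff.mp hw.2)]
    exact C.smul_mem _ hw.1
  | zero => simp
  | add x y _ _ hx hy => simpa [mul_add, add_mul] using add_mem hx hy

theorem tendsto_zpow_neg_two_smul_conj_nhds_zero [NormedField K] {h : Matrix n n K}
    (hdiag : ⨆ k : ℤ, eigenspace h.mulVecLin (k : K) = ⊤)
    {ι : Kˣ → (Matrix n n K)ˣ}
    (hι : ∀ (s : Kˣ) (k : ℤ) v, h *ᵥ v = (k : K) • v → (ι s).val *ᵥ v = (s : K) ^ k • v)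
    {v : Matrix n n K}
    (hv : v ∈ ⨆ k : ℤ, ⨆ _ : k ≤ 1,
      eigenspace (LinearMap.mulLeft K h - LinearMap.mulRight K h) (k : K)) :
    Tendsto (fun s : Kˣ => (s : K) ^ (-2 : ℤ) • ((ι s).val * v * (ι s)⁻¹.val))
      (comap Units.val (cobounded K)) (𝓝 0) := by
  rw [iSup_subtype'] at hv
  induction hv using Submodule.iSup_induction' with
  | mem k w hw =>
    have hconj : ∀ s : Kˣ, (s : K) ^ (-2 : ℤ) • ((ι s).val * w * (ι s)⁻¹.val)
        = (s : K) ^ ((k : ℤ) - 2) • w := fun s => by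
      rw [conj_eq_zpow_smul_of_commutator_eq hdiag s.ne_zero (hι s) (mem_eigenspace_iff.mp hw),
        smul_smul, ← zpow_add₀ s.ne_zero, neg_add_eq_sub]
    have hk : (k : ℤ) - 2 < 0 := by linarith [k.2]
    simp_rw [hconj]
    simpa using ((tendsto_zpow_cobounded_nhds_zero (K := K) hk).comp tendsto_comap).smul_const w
  | zero => simpa using tendsto_const_nhds
  | add x y _ _ hx hy => simpa [mul_add, add_mul] using hx.add hy

end

theorem stmt4_general (N : ℕ)
    (e h : Matrix (Fin N) (Fin N) ℂ)
    (hdiag : ⨆ k : ℤ, Module.End.eigenspace (Matrix.mulVecLin h) (k : ℂ) = ⊤)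
    (hbracket : h * e - e * h = (2 : ℂ) • e)
    (ι : ℂˣ → (Matrix (Fin N) (Fin N) ℂ)ˣ)
    (hι : ∀ (s : ℂˣ) (k : ℤ) (v : Fin N → ℂ),
      h.mulVec v = (k : ℂ) • v → (ι s).val.mulVec v = ((s : ℂ) ^ k) • v)
    (C : Submodule ℂ (Matrix (Fin N) (Fin N) ℂ))
    (hC1 : ∀ c ∈ C, h * c - c * h ∈ C)
    (hC2 : C ≤ ⨆ k : ℤ, ⨆ _ : k ≤ 1,
      Module.End.eigenspace
        (LinearMap.mulLeft ℂ h - LinearMap.mulRight ℂ h) (k : ℂ)) :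
    (∀ s : ℂˣ, ((s : ℂ) ^ (-2 : ℤ)) • ((ι s).val * e * ((ι s)⁻¹).val) = e) ∧
    (∀ v ∈ C, ∀ s : ℂˣ,
      ((s : ℂ) ^ (-2 : ℤ)) • ((ι s).val * (e + v) * ((ι s)⁻¹).val) - e ∈ C) ∧
    (∀ v ∈ C, Filter.Tendsto
      (fun s : ℝ => if hs : (s : ℂ) = 0 then e else
        (((s : ℂ)) ^ (-2 : ℤ)) • ((ι (Units.mk0 (s : ℂ) hs)).val * (e + v)
          * ((ι (Units.mk0 (s : ℂ) hs))⁻¹).val))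
      Filter.atTop (nhds e)) := by
  have he : h * e - e * h = ((2 : ℤ) : ℂ) • e := by exact_mod_cast hbracket
  have fix_e : ∀ s : ℂˣ, (s : ℂ) ^ (-2 : ℤ) • ((ι s).val * e * (ι s)⁻¹.val) = e := fun s => by
    rw [Matrix.conj_eq_zpow_smul_of_commutator_eq hdiag s.ne_zero (hι s) he, smul_smul,
      ← zpow_add₀ s.ne_zero, neg_add_cancel, zpow_zero, one_smul]
  have act_add : ∀ (s : ℂˣ) v, (s : ℂ) ^ (-2 : ℤ) • ((ι s).val * (e + v) * (ι s)⁻¹.val)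
      = e + (s : ℂ) ^ (-2 : ℤ) • ((ι s).val * v * (ι s)⁻¹.val) := fun s v => by
    rw [mul_add, add_mul, smul_add, fix_e]
  refine ⟨fix_e, fun v hv s => ?_, fun v hv => ?_⟩
  · rw [act_add, add_sub_cancel_left]
    exact C.smul_mem _ <| conj_mem_of_invariant_of_le_iSup_eigenspace hdiag hC1
      (hC2.trans <| iSup_mono fun _ => iSup_le fun _ => le_rfl) s.ne_zero (hι s) hv
  · let u : ℝ → ℂˣ := fun s => if hs : (s : ℂ) = 0 then 1 else Units.mk0 s hs
    have hu : ∀ᶠ s : ℝ in atTop, (s : ℂ) ≠ 0 := by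
      filter_upwards [eventually_ne_atTop 0] with s hs using mod_cast hs
    have hu_tendsto : Tendsto u atTop (comap Units.val (cobounded ℂ)) := by
      refine tendsto_comap_iff.mpr <| (RCLike.tendsto_ofReal_atTop_cobounded ℂ).congr' ?_
      filter_upwards [hu] with s hs
      simp only [Function.comp_apply, u, dif_neg hs, Units.val_mk0]
      rfl
    have hlim := ((tendsto_zpow_neg_two_smul_conj_nhds_zero hdiag hι (hC2 hv)).comp
      hu_tendsto).const_add e
    rw [add_zero] at hlim
    refine hlim.congr' ?_
    filter_upwards [hu] with s hs
    simp only [Function.comp_apply, u, dif_neg hs]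
    rw [← act_add, Units.val_mk0]

/-- Let `𝔤 = 𝔤𝔩(N, ℂ)`, `e, h ∈ 𝔤` with `h` diagonalizable with integer
eigenvalues and `[h, e] = 2e`.  For `s ∈ ℂˣ` let `ι(s)` be the invertible operator acting
as multiplication by `s^k` on the `k`-eigenspace of `h`, and `s ∗ x = s^{−2} ι(s) x ι(s)^{−1}`.
Let `C ⊆ 𝔤` be a subspace with `[h, C] ⊆ C` contained in the sum of eigenspaces of `ad h`
with eigenvalues `≤ 1`, with `𝔤 = [𝔤, e] ⊕ C`.  Then (i) `s ∗ e = e`;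
(ii) `s ∗ (e + v) ∈ e + C` for `v ∈ C`; (iii) `s ∗ (e + v) → e` as the real parameter
`s → +∞`. -/
theorem stmt4 (N : ℕ) (hN : 1 ≤ N)
    (e h : Matrix (Fin N) (Fin N) ℂ)
    (hdiag : ⨆ k : ℤ, Module.End.eigenspace (Matrix.mulVecLin h) (k : ℂ) = ⊤)
    (hbracket : h * e - e * h = (2 : ℂ) • e)
    (ι : ℂˣ → (Matrix (Fin N) (Fin N) ℂ)ˣ)
    (hι : ∀ (s : ℂˣ) (k : ℤ) (v : Fin N → ℂ),
      h.mulVec v = (k : ℂ) • v → (ι s).val.mulVec v = ((s : ℂ) ^ k) • v)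
    (C : Submodule ℂ (Matrix (Fin N) (Fin N) ℂ))
    (hC1 : ∀ c ∈ C, h * c - c * h ∈ C)
    (hC2 : C ≤ ⨆ k : ℤ, ⨆ _ : k ≤ 1,
      Module.End.eigenspace
        (LinearMap.mulLeft ℂ h - LinearMap.mulRight ℂ h) (k : ℂ))
    (hcompl : IsCompl
      (LinearMap.range (LinearMap.mulRight ℂ e - LinearMap.mulLeft ℂ e)) C) :
    (∀ s : ℂˣ, ((s : ℂ) ^ (-2 : ℤ)) • ((ι s).val * e * ((ι s)⁻¹).val) = e) ∧
    (∀ v ∈ C, ∀ s : ℂˣ,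
      ((s : ℂ) ^ (-2 : ℤ)) • ((ι s).val * (e + v) * ((ι s)⁻¹).val) - e ∈ C) ∧
    (∀ v ∈ C, Filter.Tendsto
      (fun s : ℝ => if hs : (s : ℂ) = 0 then e else
        (((s : ℂ)) ^ (-2 : ℤ)) • ((ι (Units.mk0 (s : ℂ) hs)).val * (e + v)
          * ((ι (Units.mk0 (s : ℂ) hs))⁻¹).val))
      Filter.atTop (nhds e)) :=
  stmt4_general N e h hdiag hbracket ι hι C hC1 hC2
end

section
/- Let R be a commutative ring, c, b_1, …, b_p ∈ R, and 1 ≤ a ≤ p. Then σ_a(c, c + b_1, …, c + b_p) = Σ_{l=0}^{a} binom(p − a + l + 1, l) · c^l · σ_{a−l}(b_1, …, b_p), where σ_k denotes the k-th elementary symmetric polynomial of the given family of elements (σ_0 = 1), the left-hand side being the k = a elementary symmetric polynomial of the p + 1 elements c, c + b_1, …, c + b_p. -/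
/-!
For a multiset `s` of size `n`, Vieta's formulas read `σ_k(c + r : r ∈ s)` off the coefficient of
`X ^ (n - k)` in `∏_{r ∈ s} (X + c + r)`, the Taylor shift by `c` of `f = ∏_{r ∈ s} (X + r)`. That
coefficient is the `(n - k)`-th Hasse derivative of `f` evaluated at `c`, whose expansion is the
binomial sum. The family `c, c + b_1, …, c + b_p` is the shift by `c` of `0, b_1, …, b_p`, and the
extra `0` does not change any `σ_k`.
-/

open Polynomial

namespace Multiset

variable {R : Type*} [CommSemiring R]

theorem esymm_zero_cons (s : Multiset R) (k : ℕ) : (0 ::ₘ s).esymm k = s.esymm k := by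
  cases k <;> simp [esymm]

theorem natDegree_prod_X_add_C_le (s : Multiset R) :
    (s.map fun r => X + C r).prod.natDegree ≤ card s := by
  calc (s.map fun r => X + C r).prod.natDegree
      ≤ (s.map fun r => (X + C r).natDegree).sum := by
        simpa only [map_map, Function.comp_def] using
          natDegree_multiset_prod_le (s.map fun r => X + C r)
    _ ≤ (s.map fun _ => 1).sum :=
        sum_map_le_sum_map _ _ fun _ _ => natDegree_add_C.trans_le natDegree_X_le
    _ = card s := by simp

theorem taylor_prod_X_add_C (s : Multiset R) (c : R) :
    taylor c (s.map fun r => X + C r).prod = ((s.map (c + ·)).map fun r => X + C r).prod := by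
  change taylorAlgHom c _ = _
  rw [map_multiset_prod, map_map, map_map]
  congr 1
  refine map_congr rfl fun r _ => ?_
  simp [add_assoc]

theorem esymm_map_const_add (s : Multiset R) (c : R) {k : ℕ} (hk : k ≤ card s) :
    (s.map (c + ·)).esymm k = ∑ l ∈ Finset.range (k + 1),
      ((card s - k + l).choose l : R) * c ^ l * s.esymm (k - l) := by
  set P := (s.map fun r => X + C r).prod
  have hcoeff : (s.map (c + ·)).esymm k = (taylor c P).coeff (card s - k) := by
    rw [taylor_prod_X_add_C, prod_X_add_C_coeff _ (by simp), card_map,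
      Nat.sub_sub_self hk]
  have hdeg : (hasseDeriv (card s - k) P).natDegree < k + 1 :=
    ((natDegree_hasseDeriv_le _ _).trans
      (Nat.sub_le_sub_right (natDegree_prod_X_add_C_le s) _)).trans_lt (by omega)
  rw [hcoeff, taylor_coeff, eval_eq_sum_range' hdeg]
  refine Finset.sum_congr rfl fun l hl => ?_
  rw [Finset.mem_range] at hl
  rw [hasseDeriv_coeff, prod_X_add_C_coeff _ (by omega), add_comm l, Nat.choose_symm_add,
    show card s - (card s - k + l) = k - l by omega]
  ring

end Multiset

theorem stmt8_general (R : Type*) [CommRing R] (p : ℕ) (c : R) (b : Fin p → R) (a : ℕ)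
    (hap : a ≤ p) :
    Multiset.esymm (c ::ₘ (Finset.univ.val.map fun i : Fin p => c + b i)) a
      = ∑ l ∈ Finset.range (a + 1),
          ((p - a + l + 1).choose l : R) * c ^ l
            * Multiset.esymm (Finset.univ.val.map fun i : Fin p => b i) (a - l) := by
  have hshift : c ::ₘ (Finset.univ.val.map fun i : Fin p => c + b i)
      = (0 ::ₘ Finset.univ.val.map b).map (c + ·) := by
    simp [Function.comp_def]
  rw [hshift, Multiset.esymm_map_const_add _ _ (by simpa using hap.trans p.le_succ)]
  refine Finset.sum_congr rfl fun l _ => ?_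
  rw [Multiset.esymm_zero_cons, Multiset.card_cons, Multiset.card_map, Finset.card_val,
    Finset.card_univ, Fintype.card_fin, show p + 1 - a + l = p - a + l + 1 by omega]

/-- for a commutative ring `R`, elements `c, b_1, …, b_p ∈ R` and `1 ≤ a ≤ p`,
`σ_a(c, c + b_1, …, c + b_p) = Σ_{l=0}^{a} binom(p − a + l + 1, l) · c^l · σ_{a−l}(b_1, …, b_p)`,
where `σ_k` is the `k`-th elementary symmetric polynomial of the given family (`σ_0 = 1`). -/
theorem stmt8 (R : Type*) [CommRing R] (p : ℕ) (c : R) (b : Fin p → R) (a : ℕ)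
    (ha1 : 1 ≤ a) (hap : a ≤ p) :
    Multiset.esymm (c ::ₘ (Finset.univ.val.map fun i : Fin p => c + b i)) a
      = ∑ l ∈ Finset.range (a + 1),
          ((p - a + l + 1).choose l : R) * c ^ l
            * Multiset.esymm (Finset.univ.val.map fun i : Fin p => b i) (a - l) :=
  stmt8_general R p c b a hap
end

section
/- Let n ≥ 2 and let v = (v_1,…,v_{n−1}) and d = (d_1,…,d_{n−1}) be integers. Set v_0 = v_n = 0, d_n = 0, (d − Cv)_j = d_j − 2v_j + v_{j−1} + v_{j+1} for 1 ≤ j ≤ n−1 and (d − Cv)_n = 0 (C being the Cartan matrix of type A_{n−1}). Define λ̌_i = Σ_{j=i}^{n} d_j and a_i = v_{n−1} + Σ_{j=i}^{n} (d − Cv)_j for 1 ≤ i ≤ n. Then 2 Σ_{i=1}^{n−1} v_i d_i − 2 Σ_{i=1}^{n−1} v_i² + 2 Σ_{i=1}^{n−2} v_i v_{i+1} = Σ_{i=1}^{n} (λ̌_i)² − Σ_{i=1}^{n} (a_i)². -/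
/-!
Since `v n = 0` and `d n = 0`, the sum defining `a_i` telescopes to `a_i = λ̌_i + (v_{i-1} - v_i)`.
Expanding `a_i²`, the cross term `2 Σ_i λ̌_i (v_{i-1} - v_i)` becomes `-2 Σ_j d_j v_j` after
exchanging the order of summation (the inner sum telescopes to `v_0 - v_j = -v_j`), and the
square term `Σ_i (v_{i-1} - v_i)²` is the discrete Dirichlet energy
`2 Σ v_i² - 2 Σ v_i v_{i+1}` of `v` with zero boundary values.
-/

open Finset

theorem sum_Icc_one_pred_sub {M : Type*} [AddCommGroup M] (f : ℕ → M) (n : ℕ) :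
    ∑ i ∈ Icc 1 n, (f (i - 1) - f i) = f 0 - f n := by
  induction n with
  | zero => simp
  | succ n ih =>
    rw [sum_Icc_succ_top (by omega), ih, Nat.add_sub_cancel]
    abel

theorem sum_Icc_sum_Icc_mul_comm {R : Type*} [NonUnitalNonAssocSemiring R] (d g : ℕ → R)
    (a n : ℕ) :
    ∑ i ∈ Icc a n, (∑ j ∈ Icc i n, d j) * g i = ∑ j ∈ Icc a n, d j * ∑ i ∈ Icc a j, g i := by
  simp_rw [sum_mul, mul_sum]
  exact sum_comm' fun i j => by simp only [mem_Icc]; omega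

theorem sum_Icc_sq_pred_sub {R : Type*} [CommRing R] (v : ℕ → R) (hv0 : v 0 = 0) (m : ℕ) :
    ∑ i ∈ Icc 1 (m + 1), (v (i - 1) - v i) ^ 2
      = v (m + 1) ^ 2 + 2 * ∑ i ∈ Icc 1 m, v i ^ 2 - 2 * ∑ i ∈ Icc 1 m, v i * v (i + 1) := by
  induction m with
  | zero => simp [hv0]
  | succ m ih =>
    rw [sum_Icc_succ_top (by omega), ih, sum_Icc_succ_top (by omega),
      sum_Icc_succ_top (by omega), Nat.add_sub_cancel]
    ring

theorem sum_Icc_cartan_telescope {R : Type*} [CommRing R] (v d : ℕ → R) {n i : ℕ} (hi : i ≤ n)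
    (hvn : v n = 0) (hdn : d n = 0) :
    v (n - 1) + ∑ j ∈ Icc i n, (if j = n then 0 else d j - 2 * v j + v (j - 1) + v (j + 1))
      = ∑ j ∈ Icc i n, d j + (v (i - 1) - v i) := by
  have hsummand : ∀ j ∈ Ico i n, d j - 2 * v j + v (j - 1) + v (j + 1)
      = d j + ((v (j + 1) - v (j + 1 - 1)) - (v j - v (j - 1))) := fun j _ => by
    rw [Nat.add_sub_cancel]; ring
  rw [← sum_Ico_add_eq_sum_Icc hi, ← sum_Ico_add_eq_sum_Icc hi, if_pos rfl, hdn,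
    sum_congr rfl fun j hj => if_neg (mem_Ico.mp hj).2.ne, sum_congr rfl hsummand,
    sum_add_distrib, sum_Ico_sub (fun j => v j - v (j - 1)) hi, hvn]
  ring

/-- the combinatorial identity
`2 Σ_{i=1}^{n−1} v_i d_i − 2 Σ_{i=1}^{n−1} v_i² + 2 Σ_{i=1}^{n−2} v_i v_{i+1}
  = Σ_{i=1}^{n} (λ̌_i)² − Σ_{i=1}^{n} (a_i)²`,
where `λ̌_i = Σ_{j=i}^{n} d_j`, `a_i = v_{n−1} + Σ_{j=i}^{n} (d − Cv)_j`, with the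
conventions `v_0 = v_n = 0`, `d_n = 0`, `(d − Cv)_j = d_j − 2v_j + v_{j−1} + v_{j+1}` for
`1 ≤ j ≤ n−1` and `(d − Cv)_n = 0`. -/
theorem stmt9 (n : ℕ) (hn : 2 ≤ n) (v d : ℕ → ℤ)
    (hv0 : v 0 = 0) (hvn : v n = 0) (hdn : d n = 0) :
    2 * (∑ i ∈ Finset.Icc 1 (n - 1), v i * d i)
      - 2 * (∑ i ∈ Finset.Icc 1 (n - 1), (v i) ^ 2)
      + 2 * (∑ i ∈ Finset.Icc 1 (n - 2), v i * v (i + 1))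
    = (∑ i ∈ Finset.Icc 1 n, (∑ j ∈ Finset.Icc i n, d j) ^ 2)
      - ∑ i ∈ Finset.Icc 1 n,
          (v (n - 1) + ∑ j ∈ Finset.Icc i n,
            (if j = n then 0 else d j - 2 * v j + v (j - 1) + v (j + 1))) ^ 2 := by
  obtain ⟨m, rfl⟩ : ∃ m, n = m + 2 := ⟨n - 2, by omega⟩
  have hexpand : ∀ i ∈ Icc 1 (m + 2), (v (m + 2 - 1) + ∑ j ∈ Icc i (m + 2),
      (if j = m + 2 then 0 else d j - 2 * v j + v (j - 1) + v (j + 1))) ^ 2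
      = (∑ j ∈ Icc i (m + 2), d j) ^ 2 + 2 * ((∑ j ∈ Icc i (m + 2), d j) * (v (i - 1) - v i))
        + (v (i - 1) - v i) ^ 2 := fun i hi => by
    rw [sum_Icc_cartan_telescope v d (mem_Icc.mp hi).2 hvn hdn]; ring
  have hcross : ∑ j ∈ Icc 1 (m + 2), d j * ∑ i ∈ Icc 1 j, (v (i - 1) - v i)
      = -∑ i ∈ Icc 1 (m + 1), v i * d i := by
    simp_rw [sum_Icc_one_pred_sub, hv0]
    rw [sum_Icc_succ_top (by omega), hdn, ← sum_neg_distrib]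
    simp only [zero_mul, add_zero]
    exact sum_congr rfl fun i _ => by ring
  have henergy := sum_Icc_sq_pred_sub v hv0 (m + 1)
  rw [sum_Icc_succ_top (by omega) (fun i => v i * v (i + 1)), hvn] at henergy
  rw [sum_congr rfl hexpand, sum_add_distrib, sum_add_distrib, ← mul_sum,
    sum_Icc_sum_Icc_mul_comm, hcross, henergy]
  simp only [show m + 2 - 1 = m + 1 by omega, Nat.add_sub_cancel]
  ring
end
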